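/- arXiv:1509.03547 — 2 statements merged into one kernel-verified Lean document; each statement's English description precedes it below -/
import Mathlib

section
/- Let k ≥ 6 be a natural number with k ≡ 2 (mod 4). Then exactly ⌊k/4⌋ of the translation-orbits of 4-element subsets of ZMod k have size k/2 (namely the classes [a,b,a] with 1 ≤ a ≤ b and a + b = k/2), and every other translation-orbit has size k. -/
/-!
By orbit–stabilizer, the translation orbit of a 4-set `T ⊆ ℤ/k` has `k / |Stab T|` elements, and
`|Stab T|` divides `k` as well as `|T| = 4` (as `T + Stab T = T`, `T` is a union of cosets), hence
divides `gcd(4, k) = 2`. So every orbit has `k` or `k/2` elements, the latter exactly when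
`T + k/2 = T`, i.e. `T = {t, t + k/2, s, s + k/2}`. Translating to `t = 0` and choosing
`0 < s < k/2`, such a `T` is `[s, k/2 - s, s]` or `[k/2 - s, s, k/2 - s]`, whichever has `a ≤ b`;
the classes `[a, k/2 - a, a]` with `1 ≤ a ≤ k/4` are pairwise distinct.
-/

/-- The equivalence class `[x,y,z]`: the translation orbit of the subset
`{0, x, x+y, x+y+z}` of `ZMod k`. -/
def transClass (k : ℕ) (x y z : ℕ) : Set (Finset (ZMod k)) :=
  { T | ∃ i : ZMod k,
      T = {i, i + (x : ZMod k), i + (x : ZMod k) + (y : ZMod k),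
           i + (x : ZMod k) + (y : ZMod k) + (z : ZMod k)} }

/-- The orbit of a subset `T ⊆ ZMod k` under the translation action. -/
def transOrbit (k : ℕ) (T : Finset (ZMod k)) : Set (Finset (ZMod k)) :=
  { S | ∃ d : ZMod k, S = T.image (· + d) }

/-- The set of translation orbits of 4-element subsets of `ZMod k`. -/
def transOrbits4 (k : ℕ) : Set (Set (Finset (ZMod k))) :=
  { O | ∃ T : Finset (ZMod k), T.card = 4 ∧ O = transOrbit k T }

open Pointwise AddAction

theorem Finset.card_stabilizer_dvd_card {G : Type*} [AddCommGroup G] [DecidableEq G]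
    (s : Finset G) : Nat.card (stabilizer G s) ∣ s.card := by
  have h := AddSubgroup.card_add_eq_card_addSubgroup_add_card_quotient
    (stabilizer G (s : Set G)) s
  rw [add_stabilizer_self, stabilizer_coe_finset, Nat.card_coe_set_eq, Set.ncard_coe_finset] at h
  exact Dvd.intro _ h.symm

theorem AddAction.ncard_orbit_mul_card_stabilizer (G : Type*) {X : Type*} [AddGroup G]
    [AddAction G X] (x : X) : (orbit G x).ncard * Nat.card (stabilizer G x) = Nat.card G := by
  rw [← index_stabilizer, AddSubgroup.index_mul_card]

theorem ZMod.natCast_eq_natCast_iff_of_lt_two_mul {k p q : ℕ} (hp : p < 2 * k) (hq : q < 2 * k) :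
    (p : ZMod k) = q ↔ p = q ∨ p + k = q ∨ q + k = p := by
  have hmod : ∀ n < 2 * k, n % k = if n < k then n else n - k := fun n hn => by
    split_ifs with h
    · exact Nat.mod_eq_of_lt h
    · rw [Nat.mod_eq_sub_mod (by omega), Nat.mod_eq_of_lt (by omega)]
  rw [ZMod.natCast_eq_natCast_iff', hmod p hp, hmod q hq]
  split_ifs <;> omega

namespace ZMod

variable {k : ℕ}

theorem natCast_half_ne_zero (hk : 2 ≤ k) : ((k / 2 : ℕ) : ZMod k) ≠ 0 := by
  rw [← Nat.cast_zero, Ne, natCast_eq_natCast_iff_of_lt_two_mul (by omega) (by omega)]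
  omega

theorem natCast_half_add_self (hk : 2 ∣ k) : ((k / 2 : ℕ) : ZMod k) + (k / 2 : ℕ) = 0 := by
  rw [← Nat.cast_add, show k / 2 + k / 2 = k by omega, natCast_self]

theorem add_self_eq_zero_iff [NeZero k] (hk : 2 ∣ k) {x : ZMod k} :
    x + x = 0 ↔ x = 0 ∨ x = (k / 2 : ℕ) := by
  have hx := val_lt x
  rw [← natCast_zmod_val x, ← Nat.cast_add, ← Nat.cast_zero,
    natCast_eq_natCast_iff_of_lt_two_mul (by omega) (by omega),
    natCast_eq_natCast_iff_of_lt_two_mul (by omega) (by omega),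
    natCast_eq_natCast_iff_of_lt_two_mul (by omega) (by omega)]
  omega

theorem exists_natCast_eq_or_eq_half_add [NeZero k] (hk : 2 ∣ k) {x : ZMod k} (h0 : x ≠ 0)
    (hm : x ≠ (k / 2 : ℕ)) : ∃ v : ℕ, 0 < v ∧ v < k / 2 ∧ (x = v ∨ x = (k / 2 + v : ℕ)) := by
  have hx := val_lt x
  rw [← natCast_zmod_val x] at h0 hm ⊢
  rw [← Nat.cast_zero, Ne, natCast_eq_natCast_iff_of_lt_two_mul (by omega) (by omega)] at h0
  rw [Ne, natCast_eq_natCast_iff_of_lt_two_mul (by omega) (by omega)] at hm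
  rcases lt_or_ge x.val (k / 2) with h | h
  · exact ⟨x.val, by omega, h, Or.inl rfl⟩
  · exact ⟨x.val - k / 2, by omega, by omega, Or.inr (by congr 1; omega)⟩

end ZMod

section Translation

variable {k : ℕ}

theorem transOrbit_eq_orbit (T : Finset (ZMod k)) : transOrbit k T = orbit (ZMod k) T := by
  ext S
  simp [transOrbit, AddAction.mem_orbit_iff, ← Finset.image_vadd, add_comm, eq_comm]

theorem transClass_eq_orbit (x y z : ℕ) :
    transClass k x y z =
      orbit (ZMod k) {0, (x : ZMod k), (x : ZMod k) + y, (x : ZMod k) + y + z} := by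
  ext S
  simp [transClass, AddAction.mem_orbit_iff, Finset.vadd_finset_insert, vadd_eq_add, add_assoc,
    eq_comm]

end Translation

section TwoModFour

variable {k : ℕ} (hmod : k % 4 = 2) {T : Finset (ZMod k)}
include hmod

theorem card_stabilizer_eq_one_or_two (hT : T.card = 4) :
    Nat.card (stabilizer (ZMod k) T) = 1 ∨ Nat.card (stabilizer (ZMod k) T) = 2 := by
  have hgcd : Nat.gcd 4 k = 2 := by rw [Nat.gcd_rec, hmod]; rfl
  refine (Nat.dvd_prime Nat.prime_two).1 (hgcd ▸ Nat.dvd_gcd ?_ ?_)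
  · exact hT ▸ T.card_stabilizer_dvd_card
  · simpa using AddSubgroup.card_addSubgroup_dvd_card (stabilizer (ZMod k) T)

theorem half_mem_stabilizer_iff (hT : T.card = 4) :
    ((k / 2 : ℕ) : ZMod k) ∈ stabilizer (ZMod k) T ↔ Nat.card (stabilizer (ZMod k) T) = 2 := by
  have : NeZero k := ⟨by omega⟩
  refine ⟨fun hm => (card_stabilizer_eq_one_or_two hmod hT).resolve_left fun h1 => ?_,
    fun h2 => ?_⟩
  · rw [AddSubgroup.card_eq_one] at h1
    exact ZMod.natCast_half_ne_zero (by omega) (h1 ▸ hm)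
  · by_contra hm
    suffices stabilizer (ZMod k) T = ⊥ by simp [this] at h2
    refine (AddSubgroup.eq_bot_iff_forall _).2 fun x hx => ?_
    have h2x : (2 • (⟨x, hx⟩ : stabilizer (ZMod k) T)) = 0 := h2 ▸ card_nsmul_eq_zero'
    rw [two_nsmul, ← Subtype.val_inj] at h2x
    exact ((ZMod.add_self_eq_zero_iff (by omega)).1 h2x).resolve_right fun h => hm (h ▸ hx)

theorem ncard_orbit_eq_ite (hT : T.card = 4) :
    (orbit (ZMod k) T).ncard = if ((k / 2 : ℕ) : ZMod k) +ᵥ T = T then k / 2 else k := by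
  have h := ncard_orbit_mul_card_stabilizer (ZMod k) T
  rw [Nat.card_zmod] at h
  split_ifs with hm
  · rw [(half_mem_stabilizer_iff hmod hT).1 hm] at h
    omega
  · rwa [(card_stabilizer_eq_one_or_two hmod hT).resolve_right
      (mt (half_mem_stabilizer_iff hmod hT).2 hm), mul_one] at h

end TwoModFour

/-- The representative `{0, a, a + b, a + b + a}` of the class `[a, b, a]` when `a + b = k / 2`. -/
def abaSet (k a : ℕ) : Finset (ZMod k) :=
  {0, (a : ZMod k), ((k / 2 : ℕ) : ZMod k), ((k / 2 + a : ℕ) : ZMod k)}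

section AbaSet

variable {k : ℕ}

theorem transClass_eq_orbit_abaSet {a b : ℕ} (hab : a + b = k / 2) :
    transClass k a b a = orbit (ZMod k) (abaSet k a) := by
  rw [transClass_eq_orbit, abaSet, ← Nat.cast_add, hab, ← Nat.cast_add, add_comm]

theorem card_abaSet {a : ℕ} (ha : 0 < a) (hak : a < k / 2) : (abaSet k a).card = 4 := by
  have hne : ∀ p q : ℕ, p < 2 * k → q < 2 * k → ¬(p = q ∨ p + k = q ∨ q + k = p) →
      (p : ZMod k) ≠ q := fun p q hp hq h =>
    mt (ZMod.natCast_eq_natCast_iff_of_lt_two_mul hp hq).1 h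
  rw [abaSet, ← Nat.cast_zero, Finset.card_insert_of_notMem, Finset.card_insert_of_notMem,
    Finset.card_pair (hne _ _ (by omega) (by omega) (by omega))]
  all_goals simp only [Finset.mem_insert, Finset.mem_singleton, not_or]
  · exact ⟨hne _ _ (by omega) (by omega) (by omega), hne _ _ (by omega) (by omega) (by omega)⟩
  · exact ⟨hne _ _ (by omega) (by omega) (by omega), hne _ _ (by omega) (by omega) (by omega),
      hne _ _ (by omega) (by omega) (by omega)⟩

theorem half_vadd_abaSet (hk : 2 ∣ k) (a : ℕ) :
    ((k / 2 : ℕ) : ZMod k) +ᵥ abaSet k a = abaSet k a := by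
  have h := ZMod.natCast_half_add_self hk
  ext x
  simp only [abaSet, Finset.vadd_finset_insert, Finset.vadd_finset_singleton, vadd_eq_add,
    Nat.cast_add, add_zero, ← add_assoc, h, zero_add, Finset.mem_insert, Finset.mem_singleton]
  tauto

theorem abaSet_eq_vadd_abaSet_sub {v : ℕ} (hv : v ≤ k / 2) (hk : 2 ∣ k) :
    abaSet k v = (v : ZMod k) +ᵥ abaSet k (k / 2 - v) := by
  have e1 : (v : ZMod k) + (k / 2 - v : ℕ) = (k / 2 : ℕ) := by
    rw [← Nat.cast_add, Nat.add_sub_cancel' hv]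
  have e2 : (v : ZMod k) + (k / 2 + (k / 2 - v) : ℕ) = 0 := by
    rw [← Nat.cast_add, show v + (k / 2 + (k / 2 - v)) = k by omega, ZMod.natCast_self]
  ext x
  simp only [abaSet, Finset.vadd_finset_insert, Finset.vadd_finset_singleton, vadd_eq_add,
    add_zero, e1, e2, Finset.mem_insert, Finset.mem_singleton]
  rw [Nat.cast_add, add_comm (v : ZMod k)]
  tauto

end AbaSet

section Classification

variable {k : ℕ} [NeZero k] (hk : 2 ∣ k)
include hk

theorem exists_eq_abaSet_of_zero_mem {T : Finset (ZMod k)} (hT : T.card = 4) (h0 : 0 ∈ T)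
    (hTm : ((k / 2 : ℕ) : ZMod k) +ᵥ T = T) : ∃ v, 0 < v ∧ v < k / 2 ∧ T = abaSet k v := by
  have hadd : ∀ x ∈ T, ((k / 2 : ℕ) : ZMod k) + x ∈ T := fun x hx =>
    hTm ▸ Finset.vadd_mem_vadd_finset hx
  have hm : ((k / 2 : ℕ) : ZMod k) ∈ T := by simpa using hadd 0 h0
  obtain ⟨s, hs, hs0m⟩ := Finset.exists_mem_notMem_of_card_lt_card
    (s := {0, ((k / 2 : ℕ) : ZMod k)}) (t := T) (hT ▸ Finset.card_le_two.trans_lt (by norm_num))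
  simp only [Finset.mem_insert, Finset.mem_singleton, not_or] at hs0m
  obtain ⟨v, hv0, hvk, hsv⟩ := ZMod.exists_natCast_eq_or_eq_half_add hk hs0m.1 hs0m.2
  have hpair : (v : ZMod k) ∈ T ∧ ((k / 2 : ℕ) : ZMod k) + v ∈ T := by
    rcases hsv with rfl | rfl
    · exact ⟨hs, hadd _ hs⟩
    · rw [Nat.cast_add] at hs
      refine ⟨?_, hs⟩
      simpa only [← add_assoc, ZMod.natCast_half_add_self hk, zero_add] using hadd _ hs
  refine ⟨v, hv0, hvk, (Finset.eq_of_subset_of_card_le ?_ ?_).symm⟩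
  · simp [abaSet, Finset.insert_subset_iff, h0, hm, hpair]
  · rw [hT, card_abaSet hv0 hvk]

theorem exists_orbit_eq_transClass {T : Finset (ZMod k)} (hT : T.card = 4)
    (hTm : ((k / 2 : ℕ) : ZMod k) +ᵥ T = T) :
    ∃ a b : ℕ, 1 ≤ a ∧ a ≤ b ∧ a + b = k / 2 ∧ orbit (ZMod k) T = transClass k a b a := by
  obtain ⟨t, ht⟩ := Finset.card_pos.1 (by omega : 0 < T.card)
  obtain ⟨v, hv0, hvk, hT'⟩ := exists_eq_abaSet_of_zero_mem hk (T := -t +ᵥ T)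
    (by rw [Finset.card_vadd_finset, hT])
    (by simpa using Finset.vadd_mem_vadd_finset (a := -t) ht) (by rw [vadd_comm, hTm])
  rw [← orbit_vadd (-t), hT']
  rcases le_total v (k / 2 - v) with h | h
  · exact ⟨v, k / 2 - v, hv0, h, by omega, (transClass_eq_orbit_abaSet (by omega)).symm⟩
  · refine ⟨k / 2 - v, v, by omega, h, by omega, ?_⟩
    rw [transClass_eq_orbit_abaSet (by omega), abaSet_eq_vadd_abaSet_sub (by omega) hk, orbit_vadd]

end Classification

section Counting

variable {k : ℕ} [NeZero k]

theorem eq_of_transClass_aba_eq {a b a' b' : ℕ} (ha : 1 ≤ a) (hab : a ≤ b) (hsum : a + b = k / 2)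
    (ha' : 1 ≤ a') (hab' : a' ≤ b') (hsum' : a' + b' = k / 2)
    (h : transClass k a b a = transClass k a' b' a') : a = a' := by
  rw [transClass_eq_orbit_abaSet hsum, transClass_eq_orbit_abaSet hsum', orbit_eq_iff,
    mem_orbit_iff] at h
  obtain ⟨i, hi⟩ := h
  have hi0 : i ∈ abaSet k a := by
    rw [← hi]
    simpa using Finset.vadd_mem_vadd_finset (a := i) (by simp [abaSet] : (0 : ZMod k) ∈ abaSet k a')
  have h0 : (0 : ZMod k) ∈ i +ᵥ abaSet k a' := hi ▸ by simp [abaSet]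
  have ha : (a : ZMod k) ∈ i +ᵥ abaSet k a' := hi ▸ by simp [abaSet]
  -- all numbers below are `< 2 * k`, so each cast equation is a linear condition on naturals
  have hival := ZMod.val_lt i
  rw [← ZMod.natCast_zmod_val i] at hi0 h0 ha
  simp only [abaSet, Finset.vadd_finset_insert, Finset.vadd_finset_singleton, vadd_eq_add,
    add_zero, Finset.mem_insert, Finset.mem_singleton, ← Nat.cast_add] at hi0 h0 ha
  rw [← Nat.cast_zero] at hi0 h0
  simp (disch := omega) only [ZMod.natCast_eq_natCast_iff_of_lt_two_mul] at hi0 h0 ha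
  omega

theorem ncard_setOf_transClass_aba :
    {O | ∃ a b : ℕ, 1 ≤ a ∧ a ≤ b ∧ a + b = k / 2 ∧ O = transClass k a b a}.ncard = k / 4 := by
  have himage : {O | ∃ a b : ℕ, 1 ≤ a ∧ a ≤ b ∧ a + b = k / 2 ∧ O = transClass k a b a}
      = (fun a => transClass k a (k / 2 - a) a) '' Set.Icc 1 (k / 4) := by
    ext O
    simp only [Set.mem_ofPred_eq, Set.mem_image, Set.mem_Icc]
    constructor
    · rintro ⟨a, b, ha, hab, hsum, rfl⟩
      exact ⟨a, ⟨ha, by omega⟩, by rw [show k / 2 - a = b by omega]⟩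
    · rintro ⟨a, ⟨ha, hak⟩, rfl⟩
      exact ⟨a, k / 2 - a, ha, by omega, by omega, rfl⟩
  have hinj : Set.InjOn (fun a => transClass k a (k / 2 - a) a) (Set.Icc 1 (k / 4)) :=
    fun a ⟨ha, hak⟩ a' ⟨ha', hak'⟩ h =>
      eq_of_transClass_aba_eq ha (by omega) (by omega) ha' (by omega) (by omega) h
  rw [himage, hinj.ncard_image, ← Finset.coe_Icc, Set.ncard_coe_finset, Nat.card_Icc,
    Nat.add_sub_cancel]

end Counting

theorem transOrbits4_two_mod_four_general (k : ℕ) (hmod : k % 4 = 2) :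
    { O ∈ transOrbits4 k | O.ncard = k / 2 }
      = { O | ∃ a b : ℕ, 1 ≤ a ∧ a ≤ b ∧ a + b = k / 2 ∧ O = transClass k a b a } ∧
    { O ∈ transOrbits4 k | O.ncard = k / 2 }.ncard = k / 4 ∧
    (∀ O ∈ transOrbits4 k, O.ncard ≠ k / 2 → O.ncard = k) := by
  have : NeZero k := ⟨by omega⟩
  have hk : 2 ∣ k := by omega
  have hhalf : { O ∈ transOrbits4 k | O.ncard = k / 2 }
      = { O | ∃ a b : ℕ, 1 ≤ a ∧ a ≤ b ∧ a + b = k / 2 ∧ O = transClass k a b a } := by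
    ext O
    constructor
    · rintro ⟨⟨T, hT, rfl⟩, hO⟩
      rw [transOrbit_eq_orbit, ncard_orbit_eq_ite hmod hT] at hO
      have hTm : ((k / 2 : ℕ) : ZMod k) +ᵥ T = T := by
        by_contra h
        rw [if_neg h] at hO
        omega
      rw [transOrbit_eq_orbit]
      exact exists_orbit_eq_transClass hk hT hTm
    · rintro ⟨a, b, ha, hab, hsum, rfl⟩
      have hcard := card_abaSet (k := k) ha (by omega)
      rw [transClass_eq_orbit_abaSet hsum]
      refine ⟨⟨_, hcard, (transOrbit_eq_orbit _).symm⟩, ?_⟩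
      rw [ncard_orbit_eq_ite hmod hcard, if_pos (half_vadd_abaSet hk a)]
  refine ⟨hhalf, hhalf ▸ ncard_setOf_transClass_aba, ?_⟩
  rintro O ⟨T, hT, rfl⟩ hO
  rw [transOrbit_eq_orbit, ncard_orbit_eq_ite hmod hT] at hO ⊢
  split_ifs at hO ⊢
  · exact absurd rfl hO
  · rfl

/-- For `k ≥ 6` with `k ≡ 2 (mod 4)`, the translation orbits of 4-element subsets of
`ZMod k` of size `k/2` are exactly the classes `[a,b,a]` with `1 ≤ a ≤ b` and
`a + b = k/2`; there are exactly `⌊k/4⌋` of them, and every other orbit has size `k`. -/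
theorem transOrbits4_two_mod_four (k : ℕ) (hk : 6 ≤ k) (hmod : k % 4 = 2) :
    { O ∈ transOrbits4 k | O.ncard = k / 2 }
      = { O | ∃ a b : ℕ, 1 ≤ a ∧ a ≤ b ∧ a + b = k / 2 ∧ O = transClass k a b a } ∧
    { O ∈ transOrbits4 k | O.ncard = k / 2 }.ncard = k / 4 ∧
    (∀ O ∈ transOrbits4 k, O.ncard ≠ k / 2 → O.ncard = k) :=
  transOrbits4_two_mod_four_general k hmod
end

section
/- Let q be a prime power and F a finite field with |F| = q. The diagonal action of GL(2,F) on 4-tuples of points of the projective line, i.e. on (ℙ(F²))⁴ via (a • w) i = a • (w i), has exactly q + 12 orbits. -/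
/-- The action of an invertible matrix `a ∈ GL(2,F)` on the projective line `ℙ(F²)`,
induced by the linear action of `a` on `F² = Fin 2 → F`. -/
noncomputable def projAct {F : Type*} [Field F] (a : GL (Fin 2) F)
    (p : Projectivization F (Fin 2 → F)) : Projectivization F (Fin 2 → F) :=
  Projectivization.map (Matrix.toLin' (a : Matrix (Fin 2) (Fin 2) F))
    (by
      have hli : Function.LeftInverse
          (Matrix.toLin' ((a⁻¹ : GL (Fin 2) F) : Matrix (Fin 2) (Fin 2) F))
          (Matrix.toLin' (a : Matrix (Fin 2) (Fin 2) F)) := by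
        intro x
        have h1 : ((a⁻¹ : GL (Fin 2) F) : Matrix (Fin 2) (Fin 2) F)
            * (a : Matrix (Fin 2) (Fin 2) F) = 1 := a.inv_mul
        rw [Matrix.toLin'_apply, Matrix.toLin'_apply, Matrix.mulVec_mulVec, h1,
          Matrix.one_mulVec]
      exact hli.injective)
    p

/-- The orbit of a 4-tuple of points of the projective line `ℙ(F²)` under the diagonal
action of `GL(2,F)`. -/
noncomputable def projTupleOrbit {F : Type*} [Field F]
    (w : Fin 4 → Projectivization F (Fin 2 → F)) :
    Set (Fin 4 → Projectivization F (Fin 2 → F)) :=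
  { w' | ∃ a : GL (Fin 2) F, ∀ i : Fin 4, projAct a (w i) = w' i }

/-!
`GL(2,F)` acts on `ℙ¹(F)` sharply 3-transitively: a matrix whose columns are suitably scaled
representatives of two distinct points sends the frame `∞ = [1:0]`, `0 = [0:1]`, `1 = [1:1]` to any
three distinct points, and a matrix fixing the frame is scalar. For such an action on a finite set
`X`, the orbit of a 4-tuple with a repeated entry is determined by which entries coincide, one of
the 14 partitions of four indices into at most three blocks, while an injective 4-tuple can be
moved to exactly one tuple `(∞, 0, 1, y)` with `y ∉ {∞, 0, 1}` (`y` is the cross-ratio). This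
gives `14 + (|X| - 3)` orbits, and `|ℙ¹(F)| = q + 1`.
-/

open MulAction Function

section EqPattern

variable {ι X Y : Type*} [DecidableEq X] [DecidableEq Y]

def eqPattern (w : ι → X) : ι → ι → Bool := fun i j => w i = w j

lemma eqPattern_eq_eqPattern_iff {w : ι → X} {w' : ι → Y} :
    eqPattern w = eqPattern w' ↔ ∀ i j, w i = w j ↔ w' i = w' j := by
  simp [eqPattern, funext_iff]

lemma Function.Injective.eqPattern_comp {f : X → Y} (hf : Injective f) (w : ι → X) :
    eqPattern (f ∘ w) = eqPattern w :=
  eqPattern_eq_eqPattern_iff.2 fun _ _ => hf.eq_iff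

lemma exists_eqPattern_eq_of_card_range_le {n : ℕ} [Finite ι] {w : ι → X}
    (hw : Nat.card (Set.range w) ≤ n) : ∃ p : ι → Fin n, eqPattern p = eqPattern w := by
  refine ⟨Fin.castLE hw ∘ Finite.equivFin _ ∘ Set.rangeFactorization w, ?_⟩
  rw [(Fin.castLE_injective hw).eqPattern_comp, (Equiv.injective _).eqPattern_comp,
    ← Subtype.val_injective.eqPattern_comp]
  rfl

end EqPattern

-- The 14 set partitions of four indices into at most three blocks.
set_option maxRecDepth 100000 in
lemma card_image_eqPattern_fin_four_fin_three :
    ((Finset.univ : Finset (Fin 4 → Fin 3)).image eqPattern).card = 14 := by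
  decide

lemma Set.ncard_image_eq_ncard_image_of_eq_iff {α β γ : Type*} {f : α → β} {g : α → γ}
    {s : Set α} (h : ∀ a ∈ s, ∀ b ∈ s, f a = f b ↔ g a = g b) :
    (f '' s).ncard = (g '' s).ncard := by
  set t := (fun a => (f a, g a)) '' s
  have hfst : InjOn Prod.fst t := by
    rintro _ ⟨a, ha, rfl⟩ _ ⟨b, hb, rfl⟩ hab
    simp_all
  have hsnd : InjOn Prod.snd t := by
    rintro _ ⟨a, ha, rfl⟩ _ ⟨b, hb, rfl⟩ hab
    simp_all
  calc (f '' s).ncard = (Prod.fst '' t).ncard := by rw [Set.image_image]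
    _ = (Prod.snd '' t).ncard := by rw [hfst.ncard_image, hsnd.ncard_image]
    _ = (g '' s).ncard := by rw [Set.image_image]

lemma Nat.card_range_lt_of_not_injective {ι X : Type*} [Finite ι] {w : ι → X} (hw : ¬Injective w) :
    Nat.card (Set.range w) < Nat.card ι := by
  refine (Nat.card_le_card_of_surjective _ Set.rangeFactorization_surjective).lt_of_ne fun h => hw ?_
  exact Set.rangeFactorization_injective.1
    (Set.rangeFactorization_surjective.bijective_of_nat_card_le h.ge).injective

namespace MulAction

variable {G X : Type*} [Group G] [MulAction G X]

lemma eqPattern_smul {ι : Type*} [DecidableEq X] (g : G) (w : ι → X) :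
    eqPattern (g • w) = eqPattern w :=
  (MulAction.injective g).eqPattern_comp w

variable (G) in
lemma exists_smul_eq_embedding_of_card_le {n : ℕ} [IsMultiplyPretransitive G X n]
    (hX : n ≤ ENat.card X) {ι : Type*} [Finite ι] (hι : Nat.card ι ≤ n) (x y : ι ↪ X) :
    ∃ g : G, g • x = y := by
  have := isMultiplyPretransitive_of_le' (G := G) hι hX
  let e := (Finite.equivFin ι).symm.toEmbedding
  obtain ⟨g, hg⟩ := exists_smul_eq G (e.trans x) (e.trans y)
  refine ⟨g, Embedding.ext fun i => ?_⟩
  simpa [e] using DFunLike.congr_fun hg (Finite.equivFin ι i)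

lemma exists_smul_eq_of_eqPattern_eq [DecidableEq X] {n : ℕ} [IsMultiplyPretransitive G X n]
    (hX : n ≤ ENat.card X) {ι : Type*} [Finite ι] {w w' : ι → X}
    (hw : Nat.card (Set.range w) ≤ n) (h : eqPattern w = eqPattern w') : ∃ g : G, g • w = w' := by
  rw [eqPattern_eq_eqPattern_iff] at h
  let x : Quotient (Setoid.ker w) ↪ X := ⟨Setoid.kerLift w, Setoid.kerLift_injective w⟩
  let y : Quotient (Setoid.ker w) ↪ X :=
    ⟨Quotient.lift w' fun i j hij => (h i j).1 hij, by
      rintro ⟨i⟩ ⟨j⟩ hij; exact Quotient.sound ((h i j).2 hij)⟩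
  obtain ⟨g, hg⟩ := exists_smul_eq_embedding_of_card_le G hX
    ((Nat.card_congr (Setoid.quotientKerEquivRange w)).trans_le hw) x y
  exact ⟨g, funext fun i => DFunLike.congr_fun hg ⟦i⟧⟩

variable (G) in
lemma exists_smul_eq_snoc {n : ℕ} [IsMultiplyPretransitive G X n] (t : Fin n ↪ X)
    {w : Fin (n + 1) → X} (hw : Injective w) :
    ∃ g : G, ∃ y ∉ Set.range t, g • w = Fin.snoc t y := by
  obtain ⟨g, hg⟩ := exists_smul_eq G ⟨Fin.init w, hw.comp (Fin.castSucc_injective n)⟩ t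
  have hinit : Fin.init (g • w) = t := congrArg DFunLike.coe hg
  have hsnoc : g • w = Fin.snoc t ((g • w) (Fin.last n)) := by
    rw [← hinit, Fin.snoc_init_self]
  refine ⟨g, _, ?_, hsnoc⟩
  have : Injective (g • w) := fun i j hij => hw (smul_left_cancel g hij)
  rw [hsnoc] at this
  exact (Fin.snoc_injective_iff.1 this).2

variable (G) in
lemma ncard_orbit_image_not_injective {n : ℕ} [IsMultiplyPretransitive G X n] (t : Fin n ↪ X) :
    ((orbit G ·) '' {w : Fin (n + 1) → X | ¬Injective w}).ncard =
      ((Finset.univ : Finset (Fin (n + 1) → Fin n)).image eqPattern).card := by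
  classical
  have hX : n ≤ ENat.card X := by simpa using ENat.card_le_card_of_injective t.injective
  have hrange {w : Fin (n + 1) → X} (hw : ¬Injective w) : Nat.card (Set.range w) ≤ n := by
    have := Nat.card_range_lt_of_not_injective hw
    rw [Nat.card_fin] at this
    omega
  rw [Set.ncard_image_eq_ncard_image_of_eq_iff (g := eqPattern), ← Set.ncard_coe_finset,
    Finset.coe_image, Finset.coe_univ, Set.image_univ]
  · congr 1
    ext P
    constructor
    · rintro ⟨w, hw, rfl⟩
      exact exists_eqPattern_eq_of_card_range_le (hrange hw)
    · rintro ⟨p, rfl⟩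
      refine ⟨t ∘ p, fun h => ?_, t.injective.eqPattern_comp p⟩
      simpa using Fintype.card_le_of_injective _ h.of_comp
  · intro w hw w' hw'
    rw [orbit_eq_iff, mem_orbit_iff]
    constructor
    · rintro ⟨g, rfl⟩
      exact eqPattern_smul g w'
    · intro h
      exact exists_smul_eq_of_eqPattern_eq hX (hrange hw') h.symm

variable (G) in
lemma ncard_orbit_image_injective [Finite X] {n : ℕ} [IsMultiplyPretransitive G X n]
    (t : Fin n ↪ X) (ht : ∀ g : G, (∀ i, g • t i = t i) → ∀ x : X, g • x = x) :
    ((orbit G ·) '' {w : Fin (n + 1) → X | Injective w}).ncard = Nat.card X - n := by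
  have himage : (orbit G ·) '' {w : Fin (n + 1) → X | Injective w} =
      (fun y => orbit G (Fin.snoc t y : Fin (n + 1) → X)) '' (Set.range t)ᶜ := by
    ext O
    constructor
    · rintro ⟨w, hw, rfl⟩
      obtain ⟨g, y, hy, hg⟩ := exists_smul_eq_snoc G t hw
      exact ⟨y, hy, by simp only [← hg, orbit_smul]⟩
    · rintro ⟨y, hy, rfl⟩
      exact ⟨_, Fin.snoc_injective_iff.2 ⟨t.injective, hy⟩, rfl⟩
  have hinj : Set.InjOn (fun y => orbit G (Fin.snoc t y : Fin (n + 1) → X)) (Set.range t)ᶜ := by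
    intro y _ y' _ h
    obtain ⟨g, hg⟩ := mem_orbit_iff.1 (orbit_eq_iff.1 h)
    have hfix (i : Fin n) : g • t i = t i := by simpa using congrFun hg i.castSucc
    simpa [ht g hfix] using (congrFun hg (Fin.last n)).symm
  rw [himage, hinj.ncard_image, Set.ncard_compl, Set.ncard_range_of_injective t.injective,
    Nat.card_fin]

theorem ncard_range_orbit_fin_four [Finite X] [IsMultiplyPretransitive G X 3] (t : Fin 3 ↪ X)
    (ht : ∀ g : G, (∀ i, g • t i = t i) → ∀ x : X, g • x = x) :
    (Set.range fun w : Fin 4 → X => orbit G w).ncard = Nat.card X + 11 := by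
  have h3 : 3 ≤ Nat.card X := by simpa using Nat.card_le_card_of_injective t t.injective
  have hdisj : Disjoint ((orbit G ·) '' {w : Fin 4 → X | Injective w}ᶜ)
      ((orbit G ·) '' {w | Injective w}) := by
    rw [Set.disjoint_left]
    rintro _ ⟨w, hw, rfl⟩ ⟨w', hw', h⟩
    obtain ⟨g, rfl⟩ := mem_orbit_iff.1 (orbit_eq_iff.1 h)
    exact hw fun i j hij => hw' (by simp [hij])
  rw [← Set.image_univ, ← Set.compl_union_self {w : Fin 4 → X | Injective w}, Set.image_union,
    Set.ncard_union_eq hdisj, ncard_orbit_image_injective G t ht, Set.compl_ofPred,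
    ncard_orbit_image_not_injective G t, card_image_eqPattern_fin_four_fin_three]
  omega

end MulAction

open Projectivization Matrix
open scoped LinearAlgebra.Projectivization

namespace Projectivization

variable {F : Type*} [Field F]

def stdFrameVec : Fin 3 → Fin 2 → F := ![![1, 0], ![0, 1], ![1, 1]]

lemma stdFrameVec_ne_zero (i : Fin 3) : (stdFrameVec i : Fin 2 → F) ≠ 0 := by
  fin_cases i <;> simp [stdFrameVec, funext_iff, Fin.forall_fin_two]

def stdFrame : Fin 3 ↪ ℙ F (Fin 2 → F) where
  toFun i := mk F (stdFrameVec i : Fin 2 → F) (stdFrameVec_ne_zero i)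
  inj' i j h := by
    rw [mk_eq_mk_iff'] at h
    fin_cases i <;> fin_cases j <;> simp_all [stdFrameVec, funext_iff, Fin.forall_fin_two]

lemma smul_eq_self_of_forall_smul_stdFrame {g : GL (Fin 2) F}
    (h : ∀ i, g • (stdFrame i : ℙ F (Fin 2 → F)) = stdFrame i) (p : ℙ F (Fin 2 → F)) :
    g • p = p := by
  have hg (i : Fin 3) : ∃ c : F, c • stdFrameVec i = (g : Matrix (Fin 2) (Fin 2) F) *ᵥ stdFrameVec i :=
    (mk_eq_mk_iff' ..).1 (h i)
  obtain ⟨c₀, h₀⟩ := hg 0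
  obtain ⟨c₁, h₁⟩ := hg 1
  obtain ⟨c₂, h₂⟩ := hg 2
  simp only [stdFrameVec, mulVec_fin_two, smul_cons, smul_eq_mul, funext_iff, Fin.forall_fin_two,
    cons_val, mul_one, mul_zero, add_zero, zero_add] at h₀ h₁ h₂
  have hscalar (v : Fin 2 → F) : (g : Matrix (Fin 2) (Fin 2) F) *ᵥ v = g 0 0 • v := by
    ext i; fin_cases i <;> simp [mulVec_fin_two] <;> grind
  induction p using Projectivization.ind with
  | h v hv => exact (mk_eq_mk_iff' ..).2 ⟨_, (hscalar v).symm⟩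

lemma exists_smul_stdFrame_eq (x : Fin 3 ↪ ℙ F (Fin 2 → F)) :
    ∃ g : GL (Fin 2) F, g • stdFrame = x := by
  have hx {i j : Fin 3} (hij : i ≠ j) : x i ≠ x j := x.injective.ne hij
  set u := (x 0).rep
  set v := (x 1).rep
  have huv : LinearIndependent F ![u, v] := linearIndependent_pair_iff_ne.2 (hx (by decide))
  obtain ⟨a, b, hab⟩ : ∃ a b : F, a • u + b • v = (x 2).rep := by
    rw [← Submodule.mem_span_pair, ← Matrix.range_cons_cons_empty,
      huv.span_eq_top_of_card_eq_finrank' (by simp)]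
    trivial
  have ha : a ≠ 0 := by
    rintro rfl
    refine hx (show (2 : Fin 3) ≠ 1 by decide) ?_
    rw [← mk_rep (x 2), ← mk_rep (x 1), mk_eq_mk_iff']
    exact ⟨b, by simpa using hab⟩
  have hb : b ≠ 0 := by
    rintro rfl
    refine hx (show (2 : Fin 3) ≠ 0 by decide) ?_
    rw [← mk_rep (x 2), ← mk_rep (x 0), mk_eq_mk_iff']
    exact ⟨a, by simpa using hab⟩
  have hu₀ : a • u ≠ 0 := smul_ne_zero ha (rep_nonzero _)
  have hv₀ : b • v ≠ 0 := smul_ne_zero hb (rep_nonzero _)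
  have hu : mk F (a • u) hu₀ = x 0 := ((mk_eq_mk_iff' ..).2 ⟨a, rfl⟩).trans (mk_rep _)
  have hv : mk F (b • v) hv₀ = x 1 := ((mk_eq_mk_iff' ..).2 ⟨b, rfl⟩).trans (mk_rep _)
  have hw : mk F (a • u + b • v) (hab ▸ rep_nonzero _) = x 2 := by
    simp_rw [hab, mk_rep]
  have hcols : LinearIndependent F ![a • u, b • v] := by
    rw [← independent_mk_iff_LinearIndependent hu₀ hv₀, hu, hv, independent_pair_iff_ne]
    exact hx (by decide)
  obtain ⟨g, hg⟩ : IsUnit (Matrix.of ![a • u, b • v])ᵀ :=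
    linearIndependent_cols_iff_isUnit.1 hcols
  refine ⟨g, ?_⟩
  ext i : 1
  fin_cases i <;> [refine .trans ?_ hu; refine .trans ?_ hv; refine .trans ?_ hw] <;>
    exact (mk_eq_mk_iff' ..).2 ⟨1, by ext j; fin_cases j <;> simp [hg, stdFrameVec]⟩

instance : IsMultiplyPretransitive (GL (Fin 2) F) (ℙ F (Fin 2 → F)) 3 :=
  (isPretransitive_iff_base stdFrame).2 exists_smul_stdFrame_eq

end Projectivization

section ProjectiveLine

variable {F : Type*} [Field F]

lemma projAct_eq_smul (a : GL (Fin 2) F) (p : ℙ F (Fin 2 → F)) : projAct a p = a • p := by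
  induction p using Projectivization.ind with
  | h v hv => rfl

lemma projTupleOrbit_eq_orbit (w : Fin 4 → ℙ F (Fin 2 → F)) :
    projTupleOrbit w = orbit (GL (Fin 2) F) w := by
  ext w'
  simp [projTupleOrbit, projAct_eq_smul, mem_orbit_iff, funext_iff]

end ProjectiveLine

theorem card_projTupleOrbits_general (q : ℕ) (F : Type*) [Field F] [Fintype F]
    (hF : Fintype.card F = q) :
    { O : Set (Fin 4 → Projectivization F (Fin 2 → F)) |
        ∃ w : Fin 4 → Projectivization F (Fin 2 → F), O = projTupleOrbit w }.ncard
      = q + 12 := by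
  have hcard : Nat.card (ℙ F (Fin 2 → F)) = q + 1 := by
    rw [card_of_finrank_two F _ (Module.finrank_fin_fun F), Nat.card_eq_fintype_card, hF]
  have hset : { O : Set (Fin 4 → ℙ F (Fin 2 → F)) | ∃ w, O = projTupleOrbit w } =
      Set.range fun w => orbit (GL (Fin 2) F) w := by
    ext O
    simp [projTupleOrbit_eq_orbit, eq_comm]
  rw [hset, ncard_range_orbit_fin_four stdFrame fun _ => smul_eq_self_of_forall_smul_stdFrame,
    hcard]

/-- The diagonal action of `GL(2,F)` on 4-tuples of points of the projective line over a
field with `q` elements has exactly `q + 12` orbits. -/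
theorem card_projTupleOrbits (q : ℕ) (hq : IsPrimePow q) (F : Type*) [Field F] [Fintype F]
    (hF : Fintype.card F = q) :
    { O : Set (Fin 4 → Projectivization F (Fin 2 → F)) |
        ∃ w : Fin 4 → Projectivization F (Fin 2 → F), O = projTupleOrbit w }.ncard
      = q + 12 :=
  card_projTupleOrbits_general q F hF
end
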